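/- arXiv:2003.02368 — 2 statements merged into one kernel-verified Lean document; each statement's English description precedes it below -/
import Mathlib

section
/- Let Q : Fin n → ℝ be the true queue lengths, nonnegative, and let Q̃ : Fin n → Fin m → ℝ be the local views, one per dispatcher j. For each dispatcher j let x^j, y^j : Fin n → ℝ be nonnegative allocations summing to a^j ≥ 0, where x^j is supported on an index minimizing i ↦ Q̃ᵢⱼ and y^j is supported on an index minimizing i ↦ Qᵢ. Then Σᵢ Σⱼ Qᵢ·(x^jᵢ − y^jᵢ) ≤ Σᵢ Σⱼ (Σₖ a^k)·|Qᵢ − Q̃ᵢⱼ|. -/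
theorem stmt_6 (n m : ℕ) (Q : Fin n → ℝ) (Qt : Fin n → Fin m → ℝ)
    (x y : Fin m → Fin n → ℝ) (a : Fin m → ℝ)
    (hQ : ∀ i, 0 ≤ Q i) (ha : ∀ j, 0 ≤ a j)
    (hx : ∀ j i, 0 ≤ x j i) (hy : ∀ j i, 0 ≤ y j i)
    (hxsum : ∀ j, ∑ i, x j i = a j) (hysum : ∀ j, ∑ i, y j i = a j)
    (ix : Fin m → Fin n)
    (hixmin : ∀ j i, Qt (ix j) j ≤ Qt i j)
    (hxsupp : ∀ j i, i ≠ ix j → x j i = 0)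
    (iy : Fin m → Fin n)
    (hiymin : ∀ j i, Q (iy j) ≤ Q i)
    (hysupp : ∀ j i, i ≠ iy j → y j i = 0) :
    ∑ i, ∑ j, Q i * (x j i - y j i) ≤ ∑ i, ∑ j, (∑ k, a k) * |Q i - Qt i j| := by
  rw [Finset.sum_comm]
  rw [Finset.sum_comm (f := fun i j => (∑ k, a k) * |Q i - Qt i j|)]
  apply Finset.sum_le_sum
  intro j _
  set S := ∑ k, a k with hS
  have hS0 : 0 ≤ S := Finset.sum_nonneg fun k _ => ha k
  have haS : a j ≤ S := Finset.single_le_sum (fun k _ => ha k) (Finset.mem_univ j)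
  have hxv : x j (ix j) = a j := by
    rw [← hxsum j]
    exact (Finset.sum_eq_single _ (fun i _ hi => hxsupp j i hi)
      (fun h => absurd (Finset.mem_univ _) h)).symm
  have hyv : y j (iy j) = a j := by
    rw [← hysum j]
    exact (Finset.sum_eq_single _ (fun i _ hi => hysupp j i hi)
      (fun h => absurd (Finset.mem_univ _) h)).symm
  have hL : ∑ i, Q i * (x j i - y j i)
      = a j * (Q (ix j) - Q (iy j)) := by
    have h1 : ∑ i, Q i * x j i = Q (ix j) * a j := by
      rw [← hxv]
      exact Finset.sum_eq_single _ (fun i _ hi => by rw [hxsupp j i hi, mul_zero])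
        (fun h => absurd (Finset.mem_univ _) h)
    have h2 : ∑ i, Q i * y j i = Q (iy j) * a j := by
      rw [← hyv]
      exact Finset.sum_eq_single _ (fun i _ hi => by rw [hysupp j i hi, mul_zero])
        (fun h => absurd (Finset.mem_univ _) h)
    have : ∑ i, Q i * (x j i - y j i) = ∑ i, Q i * x j i - ∑ i, Q i * y j i := by
      rw [← Finset.sum_sub_distrib]
      exact Finset.sum_congr rfl fun i _ => by ring
    rw [this, h1, h2]; ring
  rw [hL]
  have hnn : ∀ i ∈ (Finset.univ : Finset (Fin n)), 0 ≤ S * |Q i - Qt i j| :=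
    fun i _ => mul_nonneg hS0 (abs_nonneg _)
  by_cases hc : ix j = iy j
  · rw [hc]
    simp only [sub_self, mul_zero]
    exact Finset.sum_nonneg hnn
  · have hdiff : Q (ix j) - Q (iy j) ≤ |Q (ix j) - Qt (ix j) j| + |Q (iy j) - Qt (iy j) j| := by
      have h1 := le_abs_self (Q (ix j) - Qt (ix j) j)
      have h2 := le_abs_self (Qt (iy j) j - Q (iy j))
      have h3 := hixmin j (iy j)
      rw [abs_sub_comm] at h2
      linarith
    calc a j * (Q (ix j) - Q (iy j)) ≤ S * (Q (ix j) - Q (iy j)) := by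
          have := sub_nonneg.mpr (hiymin j (ix j))
          exact mul_le_mul_of_nonneg_right haS this
      _ ≤ S * (|Q (ix j) - Qt (ix j) j| + |Q (iy j) - Qt (iy j) j|) :=
          mul_le_mul_of_nonneg_left hdiff hS0
      _ = ∑ i ∈ ({ix j, iy j} : Finset (Fin n)), S * |Q i - Qt i j| := by
          rw [Finset.sum_pair hc]; ring
      _ ≤ ∑ i, S * |Q i - Qt i j| :=
          Finset.sum_le_sum_of_subset_of_nonneg (Finset.subset_univ _)
            (fun i hi _ => hnn i hi)
end

section
/- Let (Z(t))_{t≥0} be a sequence of nonnegative random variables and (I(t))_{t≥0} indicator random variables with E[I(t) | Z(t)] ≥ ε̄ > 0 for all t, and suppose Z(t+1) ≤ (1 − I(t))·Z(t) + a(t) + s(t) where a(t), s(t) ≥ 0 are random variables independent of Z(t) with E[a(t)] ≤ λ and E[s(t)] ≤ μ for constants λ, μ ≥ 0. If E[Z(0)] ≤ C₀, then for all t, E[Z(t)] ≤ max{(λ + μ)/ε̄, C₀}. -/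
open MeasureTheory ProbabilityTheory

/-!
Conditioning on `Z t` and pulling `Z t` out of the conditional expectation gives
`E[I(t) Z(t)] = E[Z(t) E[I(t) | Z(t)]] ≥ ε E[Z(t)]`, so taking expectations in the recursion yields
the drift inequality `E[Z(t+1)] ≤ (1 - ε) E[Z(t)] + λ + μ`. The interval `(-∞, max ((λ + μ)/ε) C₀]`
is invariant under `x ↦ (1 - ε) x + λ + μ` and contains `E[Z(0)]`.
-/

section CondExp

variable {Ω : Type*} {m m₀ : MeasurableSpace Ω} {μ : Measure Ω} {I Z : Ω → ℝ} {ε : ℝ}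

theorem integrable_of_le_condExp [NeZero μ] (hε : 0 < ε) (h : ∀ᵐ ω ∂μ, ε ≤ μ[I | m] ω) :
    Integrable I μ := by
  by_contra hI
  obtain ⟨ω, hω⟩ := h.exists
  rw [condExp_of_not_integrable hI] at hω
  exact hω.not_gt hε

theorem mul_integral_le_integral_mul_of_le_condExp [IsFiniteMeasure μ] (hm : m ≤ m₀)
    (hZm : StronglyMeasurable[m] Z) (hZnn : 0 ≤ᵐ[μ] Z) (hZ : Integrable Z μ)
    (hI : Integrable I μ) (hIZ : Integrable (fun ω => I ω * Z ω) μ)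
    (h : ∀ᵐ ω ∂μ, ε ≤ μ[I | m] ω) :
    ε * ∫ ω, Z ω ∂μ ≤ ∫ ω, I ω * Z ω ∂μ := by
  have hZI : Integrable (Z * I) μ := by rw [mul_comm]; exact hIZ
  have hpull : μ[Z * I | m] =ᵐ[μ] Z * μ[I | m] :=
    condExp_mul_of_stronglyMeasurable_left hZm hZI hI
  calc ε * ∫ ω, Z ω ∂μ = ∫ ω, ε * Z ω ∂μ := (integral_const_mul ε Z).symm
    _ ≤ ∫ ω, (Z * μ[I | m]) ω ∂μ := by
      refine integral_mono_ae (hZ.const_mul ε) (integrable_condExp.congr hpull) ?_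
      filter_upwards [hZnn, h] with ω hZω hω
      simpa only [Pi.mul_apply, mul_comm ε] using mul_le_mul_of_nonneg_left hω hZω
    _ = ∫ ω, (μ[Z * I | m]) ω ∂μ := (integral_congr_ae hpull).symm
    _ = ∫ ω, I ω * Z ω ∂μ := by
      rw [integral_condExp hm]
      simp only [Pi.mul_apply, mul_comm]

end CondExp

theorem le_max_div_of_le_one_sub_mul_add {x : ℕ → ℝ} {ε c C₀ : ℝ} (hε : 0 < ε) (hε1 : ε ≤ 1)
    (hx0 : x 0 ≤ C₀) (hx : ∀ n, x (n + 1) ≤ (1 - ε) * x n + c) (n : ℕ) :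
    x n ≤ max (c / ε) C₀ := by
  induction n with
  | zero => exact hx0.trans (le_max_right _ _)
  | succ n ih =>
    have hc : c ≤ ε * max (c / ε) C₀ := by
      calc c = ε * (c / ε) := by field_simp
        _ ≤ ε * max (c / ε) C₀ := by gcongr; exact le_max_left _ _
    calc x (n + 1) ≤ (1 - ε) * x n + c := hx n
      _ ≤ (1 - ε) * max (c / ε) C₀ + ε * max (c / ε) C₀ := by gcongr
      _ = max (c / ε) C₀ := by ring

theorem stmt_8_general {Ω : Type*} [MeasureSpace Ω] [IsProbabilityMeasure (volume : Measure Ω)]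
    (Z I a s : ℕ → Ω → ℝ) (ε lam mu C₀ : ℝ)
    (hε : 0 < ε) (hε1 : ε ≤ 1)
    (hZnn : ∀ t, ∀ᵐ ω, 0 ≤ Z t ω)
    (hZm : ∀ t, Measurable (Z t))
    (hZint : ∀ t, Integrable (Z t))
    (hIZint : ∀ t, Integrable (fun ω => I t ω * Z t ω))
    (haint : ∀ t, Integrable (a t)) (hsint : ∀ t, Integrable (s t))
    (hcond : ∀ t, ∀ᵐ ω,
      ε ≤ (volume[I t | MeasurableSpace.comap (Z t) Real.measurableSpace]) ω)
    (hrec : ∀ t, ∀ᵐ ω, Z (t + 1) ω ≤ (1 - I t ω) * Z t ω + a t ω + s t ω)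
    (hEa : ∀ t, ∫ ω, a t ω ≤ lam) (hEs : ∀ t, ∫ ω, s t ω ≤ mu)
    (hZ0 : ∫ ω, Z 0 ω ≤ C₀) :
    ∀ t, ∫ ω, Z t ω ≤ max ((lam + mu) / ε) C₀ := by
  refine le_max_div_of_le_one_sub_mul_add hε hε1 hZ0 fun t => ?_
  have hupdate : ε * ∫ ω, Z t ω ≤ ∫ ω, I t ω * Z t ω :=
    mul_integral_le_integral_mul_of_le_condExp (hZm t).comap_le
      (comap_measurable (Z t)).stronglyMeasurable (hZnn t) (hZint t)
      (integrable_of_le_condExp hε (hcond t)) (hIZint t) (hcond t)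
  have hdiff : Integrable (fun ω => Z t ω - I t ω * Z t ω) := (hZint t).sub (hIZint t)
  have hdrift : ∫ ω, Z (t + 1) ω
      ≤ (∫ ω, Z t ω) - (∫ ω, I t ω * Z t ω) + (∫ ω, a t ω) + ∫ ω, s t ω := by
    calc ∫ ω, Z (t + 1) ω ≤ ∫ ω, Z t ω - I t ω * Z t ω + a t ω + s t ω := by
          refine integral_mono_ae (hZint (t + 1)) ((hdiff.add (haint t)).add (hsint t)) ?_
          filter_upwards [hrec t] with ω hω
          linarith
      _ = _ := by
          rw [integral_add (f := fun ω => Z t ω - I t ω * Z t ω + a t ω) (hdiff.add (haint t))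
            (hsint t), integral_add hdiff (haint t), integral_sub (hZint t) (hIZint t)]
  linarith [hEa t, hEs t]

theorem stmt_8 {Ω : Type*} [MeasureSpace Ω] [IsProbabilityMeasure (volume : Measure Ω)]
    (Z I a s : ℕ → Ω → ℝ) (ε lam mu C₀ : ℝ)
    (hε : 0 < ε) (hε1 : ε ≤ 1) (hlam : 0 ≤ lam) (hmu : 0 ≤ mu)
    (hZnn : ∀ t, ∀ᵐ ω, 0 ≤ Z t ω)
    (hInd : ∀ t, ∀ᵐ ω, I t ω = 0 ∨ I t ω = 1)
    (hZm : ∀ t, Measurable (Z t))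
    (hZint : ∀ t, Integrable (Z t))
    (hIZint : ∀ t, Integrable (fun ω => I t ω * Z t ω))
    (haint : ∀ t, Integrable (a t)) (hsint : ∀ t, Integrable (s t))
    (hann : ∀ t ω, 0 ≤ a t ω) (hsnn : ∀ t ω, 0 ≤ s t ω)
    (hcond : ∀ t, ∀ᵐ ω,
      ε ≤ (volume[I t | MeasurableSpace.comap (Z t) Real.measurableSpace]) ω)
    (hrec : ∀ t, ∀ᵐ ω, Z (t + 1) ω ≤ (1 - I t ω) * Z t ω + a t ω + s t ω)
    (haindep : ∀ t, IndepFun (a t) (Z t))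
    (hsindep : ∀ t, IndepFun (s t) (Z t))
    (hEa : ∀ t, ∫ ω, a t ω ≤ lam) (hEs : ∀ t, ∫ ω, s t ω ≤ mu)
    (hZ0 : ∫ ω, Z 0 ω ≤ C₀) :
    ∀ t, ∫ ω, Z t ω ≤ max ((lam + mu) / ε) C₀ :=
  stmt_8_general Z I a s ε lam mu C₀ hε hε1 hZnn hZm hZint hIZint haint hsint hcond hrec hEa hEs hZ0
end
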